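/- arXiv:1109.0062 — 3 statements merged into one kernel-verified Lean document; each statement's English description precedes it below -/
import Mathlib

section
/- Let A be an irreducible transition matrix on ℕ and let I ⊂ ℕ be a finite set. Then there exists a finite set 𝒜 ⊇ I of symbols such that the restriction A|_{𝒜×𝒜} is irreducible, i.e., for any i,j ∈ 𝒜 there is a word with all symbols in 𝒜 connecting i to j. -/
/-!
Enlarge `I` by the letters of one connecting word for each pair of points of `I`. Each new
letter lies on a word running from `I` to `I`, so inside the enlarged set it is reached from `I`
and reaches `I`; since any two points of `I` are connected there too, any two points are.
-/

namespace List

variable {α : Type*} {R : α → α → Prop}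

def ConnectsWithin (R : α → α → Prop) (S : Set α) (i j : α) : Prop :=
  ∃ w : List α, (∀ a ∈ w, a ∈ S) ∧ IsChain R (i :: (w ++ [j]))

namespace ConnectsWithin

variable {S T : Set α} {i j m : α}

theorem mono (h : ConnectsWithin R S i j) (hST : S ⊆ T) : ConnectsWithin R T i j :=
  let ⟨w, hw, hc⟩ := h
  ⟨w, fun a ha => hST (hw a ha), hc⟩

theorem trans (h₁ : ConnectsWithin R S i m) (hm : m ∈ S) (h₂ : ConnectsWithin R S m j) :
    ConnectsWithin R S i j := by
  obtain ⟨u, hu, hcu⟩ := h₁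
  obtain ⟨v, hv, hcv⟩ := h₂
  refine ⟨u ++ m :: v, ?_, ?_⟩
  · intro a ha
    rw [mem_append, mem_cons] at ha
    rcases ha with ha | rfl | ha
    exacts [hu a ha, hm, hv a ha]
  · rw [append_assoc, cons_append, isChain_cons_split]
    exact ⟨hcu, hcv⟩

end ConnectsWithin

theorem connectsWithin_of_mem_interior {w : List α} {i j a : α}
    (hc : IsChain R (i :: (w ++ [j]))) (ha : a ∈ w) :
    ConnectsWithin R {x | x ∈ w} i a ∧ ConnectsWithin R {x | x ∈ w} a j := by
  obtain ⟨s, t, rfl⟩ := mem_iff_append.1 ha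
  rw [append_assoc, cons_append, isChain_cons_split] at hc
  exact ⟨⟨s, fun x hx => mem_append_left _ hx, hc.1⟩,
    ⟨t, fun x hx => mem_append_right _ (mem_cons_of_mem _ hx), hc.2⟩⟩

end List

open Finset List

theorem exists_superset_connectsWithin {α : Type*} [DecidableEq α] {R : α → α → Prop}
    {I : Finset α} (h : ∀ i ∈ I, ∀ j ∈ I, ∃ w : List α, IsChain R (i :: (w ++ [j]))) :
    ∃ 𝒜 : Finset α, I ⊆ 𝒜 ∧ ∀ i ∈ 𝒜, ∀ j ∈ 𝒜, ConnectsWithin R 𝒜 i j := by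
  choose! w hw using h
  set 𝒜 := I ∪ I.biUnion fun i => I.biUnion fun j => (w i j).toFinset
  have hI : I ⊆ 𝒜 := subset_union_left
  have hw𝒜 {i j} (hi : i ∈ I) (hj : j ∈ I) : {x | x ∈ w i j} ⊆ (𝒜 : Set α) := fun x hx =>
    mem_union_right _ (mem_biUnion.2 ⟨i, hi, mem_biUnion.2 ⟨j, hj, mem_toFinset.2 hx⟩⟩)
  have hconnI {i j} (hi : i ∈ I) (hj : j ∈ I) : ConnectsWithin R 𝒜 i j :=
    ⟨w i j, hw𝒜 hi hj, hw i hi j hj⟩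
  have hthrough {a} (ha : a ∈ 𝒜) : (∃ i ∈ I, ConnectsWithin R 𝒜 i a) ∧
      ∃ j ∈ I, ConnectsWithin R 𝒜 a j := by
    rcases mem_union.1 ha with ha | ha
    · exact ⟨⟨a, ha, hconnI ha ha⟩, ⟨a, ha, hconnI ha ha⟩⟩
    · obtain ⟨i, hi, ha⟩ := mem_biUnion.1 ha
      obtain ⟨j, hj, ha⟩ := mem_biUnion.1 ha
      obtain ⟨hia, haj⟩ := connectsWithin_of_mem_interior (hw i hi j hj) (mem_toFinset.1 ha)
      exact ⟨⟨i, hi, hia.mono (hw𝒜 hi hj)⟩, ⟨j, hj, haj.mono (hw𝒜 hi hj)⟩⟩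
  refine ⟨𝒜, hI, fun a ha b hb => ?_⟩
  obtain ⟨j, hj, haj⟩ := (hthrough ha).2
  obtain ⟨i, hi, hib⟩ := (hthrough hb).1
  exact haj.trans (hI hj) <| (hconnI hj hi).trans (hI hi) hib

/-- if `A` is an irreducible transition matrix on `ℕ` (any two symbols
are connected by an allowable word), then any finite set `I` of symbols can be
enlarged to a finite set `𝒜 ⊇ I` such that `A` restricted to `𝒜 × 𝒜` is irreducible:
any two symbols of `𝒜` are connected by an allowable word all of whose letters lie
in `𝒜`. -/
theorem stmt5 (A : ℕ → ℕ → Bool)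
    (hirr : ∀ i j : ℕ, ∃ w : List ℕ,
      List.Chain (fun a b => A a b = true) i (w ++ [j]))
    (I : Finset ℕ) :
    ∃ 𝒜 : Finset ℕ, I ⊆ 𝒜 ∧
      ∀ i ∈ 𝒜, ∀ j ∈ 𝒜, ∃ w : List ℕ, (∀ a ∈ w, a ∈ 𝒜) ∧
        List.Chain (fun a b => A a b = true) i (w ++ [j]) :=
  exists_superset_connectsWithin fun i _ j _ => hirr i j
end

section
/- Let x be a periodic point of σ with β(x) ≥ β - ε, and suppose some symbol of x is ≥ I₂ while sup f|[j] < β - ε for all j ≥ I₁ (with I₁ ≤ I₂). Then there exists a word x_ℓ…x_{ℓ+m} appearing in x such that: (1) κ(ℓ, m | x) ≥ β(x); (2) x_ℓ < I₁ and x_{ℓ+m} ≥ I₂; and (3) x_{ℓ+j} < I₂ for all 0 ≤ j ≤ m-1. -/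
open Finset

abbrev MShift (A : ℕ → ℕ → Bool) := {x : ℕ → ℕ // ∀ i, A (x i) (x (i + 1)) = true}

def mshift {A : ℕ → ℕ → Bool} (x : MShift A) : MShift A :=
  ⟨fun i => x.val (i + 1), fun i => x.prop (i + 1)⟩

/-!
Let `D t = f(σᵗ x) - β(x)`. It has period `n`, so it sums to `0` over `x_{q+1} … x_{q+n}`,
where `x_q = x_{q+n} ≥ I₂`. Let `r` be the last start in this window from which the tail sum
of `D` is still nonnegative, and `v ≥ r` the first position carrying a symbol `≥ I₂`: the tail
after `v` is negative, so `D` has nonnegative sum over `[r, v]`. The last start inside `[r, v]`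
with nonnegative tail sum is a position `ℓ` with `D ℓ ≥ 0`, and since `f < β - ε ≤ β(x)` on
symbols `≥ I₁`, this forces `x_ℓ < I₁`.
-/

lemma mshift_iterate_val {A : ℕ → ℕ → Bool} (x : MShift A) (k i : ℕ) :
    (mshift^[k] x).val i = x.val (i + k) := by
  induction k generalizing i with
  | zero => rfl
  | succ k ih =>
    rw [Function.iterate_succ_apply']
    exact (ih (i + 1)).trans (congrArg x.val (by omega))

lemma Function.Periodic.sum_range_add {M : Type*} [AddCancelCommMonoid M] {g : ℕ → M} {n : ℕ}
    (hg : Function.Periodic g n) (s : ℕ) :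
    ∑ i ∈ range n, g (s + i) = ∑ i ∈ range n, g i := by
  induction s with
  | zero => simp
  | succ s ih =>
    have h := sum_range_succ' (fun i => g (s + i)) n
    rw [sum_range_succ, add_zero, hg, ih] at h
    rw [add_right_cancel h]
    exact sum_congr rfl fun i _ => congrArg g (by omega)

lemma le_inv_mul_sum_range_iff {g : ℕ → ℝ} {k : ℕ} (hk : 0 < k) (b : ℝ) :
    b ≤ (k : ℝ)⁻¹ * ∑ i ∈ range k, g i ↔ 0 ≤ ∑ i ∈ range k, (g i - b) := by
  rw [le_inv_mul_iff₀ (by exact_mod_cast hk), sum_sub_distrib, sum_const, card_range,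
    nsmul_eq_mul, sub_nonneg, mul_comm]

lemma exists_last_start_sum_Ico_nonneg (D : ℕ → ℝ) {s t : ℕ} (hst : s < t)
    (h : 0 ≤ ∑ i ∈ Ico s t, D i) :
    ∃ r, s ≤ r ∧ r < t ∧ 0 ≤ D r ∧ 0 ≤ ∑ i ∈ Ico r t, D i ∧
      ∀ r', r < r' → r' < t → ∑ i ∈ Ico r' t, D i < 0 := by
  classical
  let starts := (Ico s t).filter fun r => 0 ≤ ∑ i ∈ Ico r t, D i
  have hne : starts.Nonempty := ⟨s, mem_filter.2 ⟨mem_Ico.2 ⟨le_rfl, hst⟩, h⟩⟩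
  set r := starts.max' hne
  obtain ⟨hr, hr_sum⟩ := mem_filter.1 (starts.max'_mem hne)
  obtain ⟨hsr, hrt⟩ := mem_Ico.1 hr
  have hlast : ∀ r', r < r' → r' < t → ∑ i ∈ Ico r' t, D i < 0 := by
    intro r' hr' hr't
    by_contra hneg
    have : r' ∈ starts := mem_filter.2 ⟨mem_Ico.2 ⟨by omega, hr't⟩, not_lt.1 hneg⟩
    exact (starts.le_max' r' this).not_gt hr'
  refine ⟨r, hsr, hrt, ?_, hr_sum, hlast⟩
  rw [sum_eq_sum_Ico_succ_bot hrt] at hr_sum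
  rcases (show r + 1 ≤ t by omega).eq_or_lt with htail | htail
  · rw [htail, Ico_self, sum_empty] at hr_sum
    linarith
  · linarith [hlast _ (Nat.lt_succ_self _) htail]

lemma exists_block_sum_Ico_nonneg (D : ℕ → ℝ) (P : ℕ → Prop) {s t : ℕ} (hst : s ≤ t)
    (hPt : P t) (h : 0 ≤ ∑ i ∈ Ico s (t + 1), D i) :
    ∃ ℓ v, s ≤ ℓ ∧ ℓ ≤ v ∧ v ≤ t ∧ P v ∧ (∀ i, ℓ ≤ i → i < v → ¬P i) ∧
      0 ≤ D ℓ ∧ 0 ≤ ∑ i ∈ Ico ℓ (v + 1), D i := by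
  classical
  obtain ⟨r, hsr, hrt, -, hr_sum, hr_last⟩ :=
    exists_last_start_sum_Ico_nonneg D (Nat.lt_succ_of_le hst) h
  have hP : ∃ v, r ≤ v ∧ P v := ⟨t, by omega, hPt⟩
  set v := Nat.find hP
  obtain ⟨hrv, hPv⟩ : r ≤ v ∧ P v := Nat.find_spec hP
  have hvt : v ≤ t := Nat.find_min' hP ⟨by omega, hPt⟩
  have hblock : 0 ≤ ∑ i ∈ Ico r (v + 1), D i := by
    rcases hvt.eq_or_lt with hv | hv
    · rwa [hv]
    · rw [← sum_Ico_consecutive D (by omega : r ≤ v + 1) (by omega)] at hr_sum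
      linarith [hr_last (v + 1) (by omega) (by omega)]
  obtain ⟨ℓ, hrℓ, hℓv, hDℓ, hℓ_sum, -⟩ :=
    exists_last_start_sum_Ico_nonneg D (Nat.lt_succ_of_le hrv) hblock
  exact ⟨ℓ, v, by omega, by omega, hvt, hPv,
    fun i hi hiv hPi => Nat.find_min hP hiv ⟨by omega, hPi⟩, hDℓ, hℓ_sum⟩

theorem stmt7_general (A : ℕ → ℕ → Bool) (f : MShift A → ℝ) (β ε : ℝ)
    (I₁ I₂ : ℕ)
    (hI₁ : ∀ y : MShift A, I₁ ≤ y.val 0 → f y < β - ε)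
    (x : MShift A) (n : ℕ) (hper : mshift^[n] x = x)
    (hβx : β - ε ≤ (n : ℝ)⁻¹ * ∑ j ∈ Finset.range n, f (mshift^[j] x))
    (hbig : ∃ j < n, I₂ ≤ x.val j) :
    ∃ ℓ m : ℕ,
      (n : ℝ)⁻¹ * ∑ j ∈ Finset.range n, f (mshift^[j] x) ≤
        ((m : ℝ) + 1)⁻¹ * ∑ j ∈ Finset.range (m + 1), f (mshift^[ℓ + j] x) ∧
      x.val ℓ < I₁ ∧ I₂ ≤ x.val (ℓ + m) ∧ ∀ j < m, x.val (ℓ + j) < I₂ := by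
  set b := (n : ℝ)⁻¹ * ∑ j ∈ Finset.range n, f (mshift^[j] x)
  let D t := f (mshift^[t] x) - b
  obtain ⟨q, hqn, hq⟩ := hbig
  have hD : Function.Periodic D n :=
    (Function.IsPeriodicPt.periodic_iterate hper).comp fun y => f y - b
  have hperiod : 0 ≤ ∑ i ∈ Ico (q + 1) (q + n + 1), D i := by
    rw [sum_Ico_eq_sum_range, show q + n + 1 - (q + 1) = n by omega, hD.sum_range_add]
    exact (le_inv_mul_sum_range_iff (by omega) b).1 le_rfl
  have hPn : I₂ ≤ x.val (q + n) := by rwa [← mshift_iterate_val, hper]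
  obtain ⟨ℓ, v, -, hℓv, -, hv, hinside, hDℓ, hsum⟩ :=
    exists_block_sum_Ico_nonneg D (fun i => I₂ ≤ x.val i) (by omega) hPn hperiod
  refine ⟨ℓ, v - ℓ, ?_, ?_, by rwa [Nat.add_sub_cancel' hℓv], fun j hj => ?_⟩
  · rw [sum_Ico_eq_sum_range, show v + 1 - ℓ = v - ℓ + 1 by omega] at hsum
    exact_mod_cast (le_inv_mul_sum_range_iff (Nat.succ_pos _) b).2 hsum
  · by_contra! hℓ
    have := hI₁ (mshift^[ℓ] x) (by rwa [mshift_iterate_val, zero_add])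
    exact (show D ℓ < 0 by simp only [D]; linarith).not_ge hDℓ
  · exact not_le.1 (hinside (ℓ + j) (by omega) (by omega))

/-- Fact 1: let `x` be periodic with `β(x) ≥ β - ε`, with some symbol
`≥ I₂`, where `sup f|[j] < β - ε` for `j ≥ I₁` and `I₁ ≤ I₂` (so `x` has a symbol
`< I₁`). Then some word `x_ℓ … x_{ℓ+m}` of `x` satisfies: (1) `κ(ℓ,m|x) ≥ β(x)`;
(2) `x_ℓ < I₁` and `x_{ℓ+m} ≥ I₂`; (3) `x_{ℓ+j} < I₂` for `0 ≤ j ≤ m-1`. -/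
theorem stmt7 (A : ℕ → ℕ → Bool) (f : MShift A → ℝ) (β ε : ℝ) (hε : 0 < ε)
    (I₁ I₂ : ℕ) (hI : I₁ ≤ I₂)
    (hI₁ : ∀ y : MShift A, I₁ ≤ y.val 0 → f y < β - ε)
    (x : MShift A) (n : ℕ) (hn : 1 ≤ n) (hper : mshift^[n] x = x)
    (hβx : β - ε ≤ (n : ℝ)⁻¹ * ∑ j ∈ Finset.range n, f (mshift^[j] x))
    (hbig : ∃ j < n, I₂ ≤ x.val j)
    (hsmall : ∃ j, x.val j < I₁) :
    ∃ ℓ m : ℕ,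
      (n : ℝ)⁻¹ * ∑ j ∈ Finset.range n, f (mshift^[j] x) ≤
        ((m : ℝ) + 1)⁻¹ * ∑ j ∈ Finset.range (m + 1), f (mshift^[ℓ + j] x) ∧
      x.val ℓ < I₁ ∧ I₂ ≤ x.val (ℓ + m) ∧ ∀ j < m, x.val (ℓ + j) < I₂ :=
  stmt7_general A f β ε I₁ I₂ hI₁ x n hper hβx hbig
end

section
/- (Key cutting lemma) Under the setup of the paper, if x is a periodic point of σ in Σ_A(ℕ) with β(x) ≥ β - ε whose orbit is not contained in Σ_A(𝒜₂), then there exists a periodic point z ∈ Σ_A(𝒜₂) with β(z) > β(x); moreover one can take β(z) ≥ κ_r(ℓ,m|x) + δ/(r+2) for the word given by the maximal-word decomposition. -/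
open MeasureTheory Finset

/-!
Write `t ≥ β - ε` for the average of `f` along the orbit of `x`; symbols `≥ I₁` carry values of `f`
below `t`. Cutting one period of the orbit at its symbols `≥ I₂` and peeling off the symbols `≥ I₁`
at the front of each block, some block keeps average `≥ t` and runs from a symbol `x_ℓ < I₁` to the
next symbol `x_{ℓ+m} ≥ I₂`. Peeling off as well the symbols `≥ I₁` just before `x_{ℓ+m}` leaves a
word `x_ℓ … x_{ℓ+r}` ending in a symbol `< I₁` which, counted together with `x_{ℓ+m}`, still has
average `≥ t`. A connecting word of length `q ≤ P₀` through `𝒜₁` closes `x_ℓ … x_{ℓ+r}` into a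
periodic point `z ∈ Σ_A(𝒜₂)`. Gluing costs at most `V` per piece, and the very negative value
`f(σ^{ℓ+m} x) ≤ min{C₁, C₂} - δ` that was dropped pays for the gluing and for the connecting word
(`C₂` when `q = 0`, `C₁` otherwise), leaving the gain `δ`. Comparing averages over the different
periods needs `β` to bound the average along every periodic orbit, which holds because the uniform
measure on a periodic orbit is invariant.
-/

open scoped ENNReal

section PeriodicOrbit

variable {α M : Type*} {T : α → α} {n : ℕ} {x : α}

theorem Function.IsPeriodicPt.birkhoffSum_apply [AddCommMonoid M] (h : Function.IsPeriodicPt T n x)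
    (g : α → M) : birkhoffSum T g n (T x) = birkhoffSum T g n x := by
  cases n with
  | zero => simp [birkhoffSum_zero]
  | succ m =>
    rw [birkhoffSum_succ, ← Function.iterate_succ_apply, h.eq, birkhoffSum_succ', add_comm]

theorem Function.IsPeriodicPt.birkhoffSum_iterate [AddCommMonoid M]
    (h : Function.IsPeriodicPt T n x) (g : α → M) (k : ℕ) :
    birkhoffSum T g n (T^[k] x) = birkhoffSum T g n x := by
  induction k with
  | zero => rfl
  | succ k ih => rw [Function.iterate_succ_apply', (h.apply_iterate k).birkhoffSum_apply, ih]

theorem birkhoffSum_iterate [AddCommMonoid M] (T : α → α) (g : α → M) (k c : ℕ) (x : α) :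
    birkhoffSum T g k (T^[c] x) = ∑ j ∈ range k, g (T^[c + j] x) := by
  simp only [birkhoffSum, ← Function.iterate_add_apply, Nat.add_comm]

variable [MeasurableSpace α]

noncomputable def orbitMeasure (T : α → α) (n : ℕ) (x : α) : Measure α :=
  (n : ℝ≥0∞)⁻¹ • birkhoffSum T Measure.dirac n x

theorem isProbabilityMeasure_orbitMeasure (hn : n ≠ 0) :
    IsProbabilityMeasure (orbitMeasure T n x) := by
  constructor
  simp [orbitMeasure, birkhoffSum, ENNReal.inv_mul_cancel (Nat.cast_ne_zero.mpr hn)]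

theorem map_orbitMeasure (hT : Measurable T) (h : Function.IsPeriodicPt T n x) :
    (orbitMeasure T n x).map T = orbitMeasure T n x := by
  rw [orbitMeasure, Measure.map_smul, ← Measure.mapₗ_apply_of_measurable hT, map_birkhoffSum]
  refine congrArg _ (Eq.trans ?_ (h.birkhoffSum_apply _))
  simp only [birkhoffSum, Function.comp_apply, Measure.mapₗ_apply_of_measurable hT,
    Measure.map_dirac' hT, ← Function.iterate_succ_apply' T, Function.iterate_succ_apply]

theorem integral_orbitMeasure [MeasurableSingletonClass α] (g : α → ℝ) :
    ∫ y, g y ∂orbitMeasure T n x = birkhoffAverage ℝ T g n x := by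
  rw [orbitMeasure, integral_smul_measure, birkhoffSum,
    integral_finsetSum_measure fun k _ => integrable_dirac enorm_lt_top]
  simp [birkhoffAverage, birkhoffSum, integral_dirac]

theorem bddAbove_integral_of_bddAbove_range {g : α → ℝ} (hg : BddAbove (Set.range g))
    (S : Set (Measure α)) (hS : ∀ μ ∈ S, IsProbabilityMeasure μ) :
    BddAbove ((fun μ => ∫ y, g y ∂μ) '' S) := by
  obtain ⟨M, hM⟩ := hg
  refine ⟨max M 0, ?_⟩
  rintro _ ⟨μ, hμ, rfl⟩
  have := hS μ hμ
  by_cases hint : Integrable g μ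
  · calc ∫ y, g y ∂μ ≤ ∫ _, max M 0 ∂μ :=
          integral_mono hint (integrable_const _) fun y => (hM ⟨y, rfl⟩).trans (le_max_left _ _)
      _ = max M 0 := by simp
  · simp [integral_undef hint]

theorem birkhoffAverage_le_sSup_integral [MeasurableSingletonClass α] {T : α → α}
    (hT : Measurable T) {g : α → ℝ} (hg : BddAbove (Set.range g)) {n : ℕ} {x : α} (hn : n ≠ 0)
    (h : Function.IsPeriodicPt T n x) :
    birkhoffAverage ℝ T g n x ≤ sSup ((fun μ : Measure α => ∫ y, g y ∂μ) ''
      {μ | IsProbabilityMeasure μ ∧ μ.map T = μ}) := by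
  refine le_csSup (bddAbove_integral_of_bddAbove_range hg _ fun μ hμ => hμ.1) ⟨orbitMeasure T n x,
    ⟨isProbabilityMeasure_orbitMeasure hn, map_orbitMeasure hT h⟩, integral_orbitMeasure g⟩

end PeriodicOrbit

section Windows

variable (s : ℕ → ℕ) (φ : ℕ → ℝ) (t : ℝ) (I₁ I₂ : ℕ)

/-- The word `x_ℓ … x_{ℓ+m}` of the paper's maximal-word decomposition, for `s = x` and
`φ j = f(σ^j x)`. -/
structure IsHeavyWindow (ℓ m : ℕ) : Prop where
  start_lt : s ℓ < I₁
  lt_of_lt_stop : ∀ j < m, s (ℓ + j) < I₂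
  le_stop : I₂ ≤ s (ℓ + m)
  mul_le_sum : (m + 1) * t ≤ ∑ j ∈ range (m + 1), φ (ℓ + j)

variable {s φ t I₁ I₂}

theorem exists_isHeavyWindow_of_block (hI : I₁ ≤ I₂) (hsmall : ∀ j, I₁ ≤ s j → φ j < t)
    (L c : ℕ) (hfree : ∀ j < L, s (c + j) < I₂) (hstop : I₂ ≤ s (c + L))
    (hsum : (L + 1) * t ≤ ∑ j ∈ range (L + 1), φ (c + j)) :
    ∃ ℓ m, IsHeavyWindow s φ t I₁ I₂ ℓ m := by
  induction L generalizing c with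
  | zero =>
    have := hsmall c (hI.trans hstop)
    simp only [zero_add, sum_range_one, add_zero, CharP.cast_eq_zero, one_mul] at hsum
    linarith
  | succ L ih =>
    by_cases hc : s c < I₁
    · exact ⟨c, L + 1, hc, hfree, hstop, hsum⟩
    · have hφc := hsmall c (not_lt.mp hc)
      rw [sum_range_succ'] at hsum
      refine ih (c + 1) (fun j hj => ?_) (by rwa [Nat.add_right_comm]) ?_
      · simpa [Nat.add_right_comm, Nat.add_assoc] using hfree (j + 1) (by omega)
      · simp only [Nat.add_right_comm c 1, ← Nat.add_assoc, add_zero] at hsum ⊢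
        push_cast at hsum ⊢
        linarith

theorem exists_isHeavyWindow_of_sum (hI : I₁ ≤ I₂) (hsmall : ∀ j, I₁ ≤ s j → φ j < t)
    (N c : ℕ) (hstop : I₂ ≤ s (c + N))
    (hsum : (N + 1) * t ≤ ∑ j ∈ range (N + 1), φ (c + j)) :
    ∃ ℓ m, IsHeavyWindow s φ t I₁ I₂ ℓ m := by
  induction N using Nat.strong_induction_on generalizing c with
  | _ N ih =>
  by_cases hex : ∃ j < N, I₂ ≤ s (c + j)
  · obtain ⟨j, hjN, hj⟩ := hex
    have hsplit := sum_range_add (fun k => φ (c + k)) (j + 1) (N - j - 1 + 1)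
    rw [show j + 1 + (N - j - 1 + 1) = N + 1 by omega] at hsplit
    by_cases h₁ : ((j : ℝ) + 1) * t ≤ ∑ k ∈ range (j + 1), φ (c + k)
    · exact ih j hjN c hj h₁
    · refine ih (N - j - 1) (by omega) (c + (j + 1))
        (by rwa [show c + (j + 1) + (N - j - 1) = c + N by omega]) ?_
      simp only [Nat.add_assoc] at hsplit ⊢
      have hcast : ((N - j - 1 : ℕ) + 1 : ℝ) * t + (j + 1) * t = (N + 1) * t := by
        rw [Nat.cast_sub (by omega), Nat.cast_sub (by omega)]; ring
      linarith
  · push Not at hex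
    exact exists_isHeavyWindow_of_block hI hsmall N c hex hstop hsum

theorem exists_isHeavyWindow_of_periodic (hI : I₁ ≤ I₂) (hsmall : ∀ j, I₁ ≤ s j → φ j < t)
    {n : ℕ} (hn : n ≠ 0) (hs : ∀ j, s (j + n) = s j)
    (hφ : ∀ c, n * t ≤ ∑ j ∈ range n, φ (c + j)) (hheavy : ∃ b, I₂ ≤ s b) :
    ∃ ℓ m, IsHeavyWindow s φ t I₁ I₂ ℓ m := by
  obtain ⟨b, hb⟩ := hheavy
  obtain ⟨N, rfl⟩ := Nat.exists_eq_succ_of_ne_zero hn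
  refine exists_isHeavyWindow_of_sum hI hsmall N (b + 1) ?_ ?_
  · rwa [Nat.add_assoc, Nat.add_comm 1, hs]
  · exact_mod_cast hφ (b + 1)

theorem exists_cut_of_mul_le (hsmall : ∀ j, I₁ ≤ s j → φ j < t) {F : ℝ} (hF : F < t) (k : ℕ)
    (hk : (k + 1) * t ≤ F + ∑ j ∈ range k, φ j) :
    ∃ r < k, s r < I₁ ∧ (r + 2) * t ≤ F + ∑ j ∈ range (r + 1), φ j := by
  induction k with
  | zero =>
    simp only [CharP.cast_eq_zero, zero_add, one_mul, sum_range_zero, add_zero] at hk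
    linarith
  | succ k ih =>
    rw [sum_range_succ] at hk
    push_cast at hk
    by_cases hk' : s k < I₁
    · exact ⟨k, lt_add_one k, hk', by rw [sum_range_succ]; linarith⟩
    · obtain ⟨r, hr, h⟩ := ih (by linarith [hsmall k (not_lt.mp hk')])
      exact ⟨r, by omega, h⟩

theorem IsHeavyWindow.exists_cut {ℓ m : ℕ} (hw : IsHeavyWindow s φ t I₁ I₂ ℓ m)
    (hI : I₁ ≤ I₂) (hsmall : ∀ j, I₁ ≤ s j → φ j < t) :
    ∃ r < m, s (ℓ + r) < I₁ ∧ (r + 2) * t ≤ φ (ℓ + m) + ∑ j ∈ range (r + 1), φ (ℓ + j) := by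
  refine exists_cut_of_mul_le (s := fun j => s (ℓ + j)) (φ := fun j => φ (ℓ + j))
    (fun j => hsmall _) (hsmall _ (hI.trans hw.le_stop)) m ?_
  linarith [hw.mul_le_sum, sum_range_succ (fun j => φ (ℓ + j)) m]

end Windows

section Arithmetic

variable {r q : ℕ} {t b K Z δ : ℝ}

theorem average_gain_of_closed_cut (hδ : 0 < δ) (hK : (r + 2) * t ≤ K) (hZ : K + δ - t ≤ Z) :
    t < ((r + 1 : ℕ) : ℝ)⁻¹ * Z ∧
      ((r : ℝ) + 2)⁻¹ * K + δ / ((r : ℝ) + 2) ≤ ((r + 1 : ℕ) : ℝ)⁻¹ * Z := by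
  have hr : (0 : ℝ) ≤ r := r.cast_nonneg
  push_cast
  rw [lt_inv_mul_iff₀ (by positivity), inv_mul_eq_div, inv_mul_eq_div, ← add_div,
    div_le_div_iff₀ (by positivity) (by positivity)]
  constructor
  · linarith
  · nlinarith [mul_nonneg (by positivity : (0 : ℝ) ≤ r + 2) (by linarith : 0 ≤ Z - (K + δ - t))]

/-- `Z / (r + 1 + q)` is a mediant of `(K + δ) / (r + 2)` and `(Z - K - δ) / (q - 1)`, and the
latter is `≥ b ≥ Z / (r + 1 + q)`. -/
theorem average_gain_of_bridged_cut (hq : 1 ≤ q) (hδ : 0 < δ) (hK : (r + 2) * t ≤ K) (htb : t ≤ b)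
    (hZ : K + δ + (q - 1) * b ≤ Z) (hZb : Z ≤ (r + 1 + q) * b) :
    t < ((r + 1 + q : ℕ) : ℝ)⁻¹ * Z ∧
      ((r : ℝ) + 2)⁻¹ * K + δ / ((r : ℝ) + 2) ≤ ((r + 1 + q : ℕ) : ℝ)⁻¹ * Z := by
  have hr : (0 : ℝ) ≤ r := r.cast_nonneg
  have hq' : (1 : ℝ) ≤ q := by exact_mod_cast hq
  push_cast
  rw [lt_inv_mul_iff₀ (by positivity), inv_mul_eq_div, inv_mul_eq_div, ← add_div,
    div_le_div_iff₀ (by positivity) (by positivity)]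
  constructor
  · nlinarith [mul_nonneg (by linarith : (0 : ℝ) ≤ q - 1) (by linarith : 0 ≤ b - t)]
  · nlinarith [mul_nonneg (by linarith : (0 : ℝ) ≤ q - 1) (by linarith : 0 ≤ (r + 1 + q) * b - Z),
      mul_nonneg (by positivity : (0 : ℝ) ≤ r + 1 + q) (by linarith : 0 ≤ Z - K - δ - (q - 1) * b)]

theorem average_gain_of_cut {r q P₀ : ℕ} {t β ε mf V δ F S W Z : ℝ} (hδ : 0 < δ) (hβt : β - ε ≤ t)
    (htβ : t ≤ β) (hqP : q ≤ P₀) (hcut : (r + 2) * t ≤ F + S)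
    (hF : F ≤ min (-((P₀ : ℝ) * |mf| + ((P₀ : ℝ) - 1) * |β| + 2 * V)) (β - ε - V) - δ)
    (hW₀ : q = 0 → W = 0) (hW : q * mf - V ≤ W) (hZ : S - V + W ≤ Z)
    (hZβ : Z ≤ (r + 1 + q) * β) :
    t < ((r + 1 + q : ℕ) : ℝ)⁻¹ * Z ∧
      ((r : ℝ) + 2)⁻¹ * (F + S) + δ / ((r : ℝ) + 2) ≤ ((r + 1 + q : ℕ) : ℝ)⁻¹ * Z := by
  have hF₁ := hF.trans (sub_le_sub_right (min_le_left _ _) δ)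
  have hF₂ := hF.trans (sub_le_sub_right (min_le_right _ _) δ)
  rcases Nat.eq_zero_or_pos q with rfl | hq
  · exact average_gain_of_closed_cut hδ hcut (by linarith [hW₀ rfl])
  · have hqP' : (q : ℝ) ≤ P₀ := by exact_mod_cast hqP
    refine average_gain_of_bridged_cut hq hδ hcut (htβ.trans (le_abs_self β)) ?_
      (hZβ.trans (mul_le_mul_of_nonneg_left (le_abs_self β) (by positivity)))
    nlinarith [mul_le_mul_of_nonneg_right hqP' (abs_nonneg mf),
      mul_le_mul_of_nonneg_right hqP' (abs_nonneg β),
      mul_le_mul_of_nonneg_left (neg_abs_le mf) q.cast_nonneg]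

end Arithmetic

namespace MShift

variable {A : ℕ → ℕ → Bool}

theorem iterate_mshift_val (x : MShift A) (k i : ℕ) : (mshift^[k] x).val i = x.val (i + k) := by
  induction k generalizing i with
  | zero => rfl
  | succ k ih =>
    rw [Function.iterate_succ_apply', mshift, ih, Nat.add_right_comm, Nat.add_assoc]

theorem measurable_mshift : Measurable (mshift (A := A)) := by
  apply Measurable.subtype_mk
  exact measurable_pi_lambda _ fun i => (measurable_pi_apply (i + 1)).comp measurable_subtype_coe

theorem isChain_range'_append (x : MShift A) (k s : ℕ) {L : List ℕ}
    (h : (x.val (k + s) :: L).IsChain (fun a b => A a b = true)) :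
    (x.val k :: ((List.range' (k + 1) s).map x.val ++ L)).IsChain (fun a b => A a b = true) := by
  induction s generalizing k with
  | zero => exact h
  | succ s ih =>
    rw [List.range'_succ, List.map_cons, List.cons_append]
    exact .cons_cons (x.prop k) (ih (k + 1) (by rwa [Nat.add_right_comm]))

/-- The periodic point `(a L)^∞`; the default `0` of `getD` is never read. -/
def ofCycle (a : ℕ) (L : List ℕ) (h : (a :: (L ++ [a])).IsChain (fun a b => A a b = true)) :
    MShift A :=
  ⟨fun i => (a :: L ++ [a]).getD (i % (L.length + 1)) 0, fun i => by
    set p := L.length + 1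
    have hk : i % p < p := Nat.mod_lt _ (Nat.succ_pos _)
    have hnext : (a :: L ++ [a]).getD ((i + 1) % p) 0 = (a :: L ++ [a]).getD (i % p + 1) 0 := by
      rw [← Nat.mod_add_mod]
      rcases (Nat.add_one_le_of_lt hk).eq_or_lt with hlast | hlt
      · rw [hlast, Nat.mod_self]
        simp [p, List.getD_eq_getElem?_getD]
      · rw [Nat.mod_eq_of_lt hlt]
    show A ((a :: L ++ [a]).getD (i % p) 0) ((a :: L ++ [a]).getD ((i + 1) % p) 0) = true
    rw [hnext, List.getD_eq_getElem _ _ (by simp; omega), List.getD_eq_getElem _ _ (by simp; omega)]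
    exact List.isChain_iff_getElem.mp h _ (by simp; omega)⟩

section Cycle

variable {a : ℕ} {L : List ℕ}
  {h : (a :: (L ++ [a])).IsChain (fun a b => A a b = true)}

theorem ofCycle_val_of_lt {i : ℕ} (hi : i < L.length + 1) :
    (ofCycle a L h).val i = (a :: L).getD i 0 := by
  show (a :: L ++ [a]).getD (i % (L.length + 1)) 0 = _
  rw [Nat.mod_eq_of_lt hi, List.getD_append _ _ _ _ hi]

theorem ofCycle_val_mem (i : ℕ) : (ofCycle a L h).val i ∈ a :: L := by
  have hi : i % (L.length + 1) < (a :: L).length := Nat.mod_lt _ (Nat.succ_pos _)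
  rw [show (ofCycle a L h).val i = (ofCycle a L h).val (i % (L.length + 1)) by
    simp [ofCycle], ofCycle_val_of_lt hi, List.getD_eq_getElem _ _ hi]
  exact List.getElem_mem hi

theorem isPeriodicPt_ofCycle : Function.IsPeriodicPt mshift (L.length + 1) (ofCycle a L h) :=
  Subtype.ext <| funext fun i => by
    rw [iterate_mshift_val]
    simp only [ofCycle, Nat.add_mod_right]

end Cycle

theorem exists_val_zero_eq
    (hcyc : ∀ j, ∃ w : List ℕ, (j :: (w ++ [j])).IsChain (fun a b => A a b = true))
    (j : ℕ) : ∃ y : MShift A, y.val 0 = j := by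
  obtain ⟨w, hw⟩ := hcyc j
  exact ⟨ofCycle j w hw, ofCycle_val_of_lt (Nat.succ_pos _)⟩

theorem exists_val_eq_getD_of_isChain {a b : ℕ} {w w' : List ℕ}
    (hw : (a :: (w ++ [b])).IsChain (fun a b => A a b = true))
    (hw' : (b :: (w' ++ [a])).IsChain (fun a b => A a b = true)) :
    ∃ y : MShift A, (∀ i, y.val i ∈ a :: (w ++ b :: w')) ∧
      ∀ i < w.length, y.val i = w.getD i 0 := by
  have h : (a :: (w ++ b :: w' ++ [a])).IsChain (fun a b => A a b = true) := by
    rw [List.append_assoc, List.cons_append]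
    exact List.isChain_cons_split.mpr ⟨hw, hw'⟩
  refine ⟨mshift (ofCycle a (w ++ b :: w') h), fun i => ofCycle_val_mem (h := h) (i + 1),
    fun i hi => ?_⟩
  rw [mshift, ofCycle_val_of_lt (by simp; omega), List.getD_cons_succ, List.getD_append _ _ _ _ hi]

theorem exists_isPeriodicPt_range'_append (x : MShift A) (ℓ r : ℕ) {w : List ℕ}
    (hw : (x.val (ℓ + r) :: (w ++ [x.val ℓ])).IsChain (fun a b => A a b = true)) :
    ∃ z : MShift A, Function.IsPeriodicPt mshift (r + 1 + w.length) z ∧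
      (∀ i, z.val i ∈ (List.range' ℓ (r + 1)).map x.val ++ w) ∧
      (∀ i ≤ r, z.val i = x.val (ℓ + i)) ∧ ∀ i < w.length, z.val (r + 1 + i) = w.getD i 0 := by
  have h := isChain_range'_append x ℓ r (L := w ++ [x.val ℓ]) hw
  rw [← List.append_assoc] at h
  set L := (List.range' (ℓ + 1) r).map x.val ++ w
  have hL : L.length = r + w.length := by simp [L]
  refine ⟨ofCycle (x.val ℓ) L h, ?_, fun i => ?_, fun i hi => ?_, fun i hi => ?_⟩
  · rw [show r + 1 + w.length = L.length + 1 by omega]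
    exact isPeriodicPt_ofCycle
  · rw [List.range'_succ, List.map_cons, List.cons_append]
    exact ofCycle_val_mem (h := h) i
  · rw [ofCycle_val_of_lt (by omega)]
    rcases i with _ | i
    · simp
    · rw [List.getD_cons_succ, List.getD_append _ _ _ _ (by simp; omega)]
      simp [List.getD_eq_getElem?_getD, show i < r by omega, Nat.add_assoc, Nat.add_comm 1]
  · rw [ofCycle_val_of_lt (by omega), show r + 1 + i = (r + i) + 1 by omega,
      List.getD_cons_succ, List.getD_append_right _ _ _ _ (by simp)]
    simp

/-- `V` bounds the total variation `∑ V_j(f)`, in the form in which it controls Birkhoff sums. -/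
def HasBoundedVariation (f : MShift A → ℝ) (V : ℝ) : Prop :=
  ∀ (r : ℕ) (x y : MShift A), (∀ i ≤ r, x.val i = y.val i) →
    birkhoffSum mshift f (r + 1) x ≤ birkhoffSum mshift f (r + 1) y + V

variable {f : MShift A → ℝ} {V : ℝ}

theorem HasBoundedVariation.birkhoffSum_le (hV : HasBoundedVariation f V) (hV0 : 0 ≤ V) {q : ℕ}
    {x y : MShift A} (h : ∀ i < q, x.val i = y.val i) :
    birkhoffSum mshift f q x ≤ birkhoffSum mshift f q y + V := by
  cases q with
  | zero => simpa [birkhoffSum_zero] using hV0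
  | succ q => exact hV q x y fun i hi => h i (by omega)

theorem bddAbove_range_of_coercive (hcyl : ∀ j, ∃ y : MShift A, y.val 0 = j)
    (hcoer : ∀ C : ℝ, ∃ N : ℕ, ∀ y : MShift A, N ≤ y.val 0 → f y < C)
    (hV : HasBoundedVariation f V) : BddAbove (Set.range f) := by
  choose y hy using hcyl
  obtain ⟨N, hN⟩ := hcoer 0
  obtain ⟨M, hM⟩ := ((Set.finite_Iio N).image fun j => f (y j) + V).bddAbove
  refine ⟨max M 0, ?_⟩
  rintro _ ⟨x, rfl⟩
  rcases lt_or_ge (x.val 0) N with hx | hx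
  · have hxy := hV 0 x (y (x.val 0)) fun i hi => by rw [Nat.le_zero.mp hi, hy]
    simp only [zero_add, birkhoffSum_one] at hxy
    exact hxy.trans ((hM ⟨x.val 0, hx, rfl⟩).trans (le_max_left _ _))
  · exact (hN x hx).le.trans (le_max_right _ _)

theorem exists_isPeriodicPt_of_cut (hV : HasBoundedVariation f V) (hV0 : 0 ≤ V)
    {I₁ P₀ : ℕ} {𝒜₁ 𝒜₂ : Set ℕ} {mf : ℝ} (h𝒜₁ : ∀ i < I₁, i ∈ 𝒜₁)
    (hconn : ∀ i < I₁, ∀ j < I₁, ∃ w : List ℕ, w.length ≤ P₀ ∧ (∀ a ∈ w, a ∈ 𝒜₁) ∧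
      (i :: (w ++ [j])).IsChain (fun a b => A a b = true))
    (hmf : ∀ y : MShift A, (∀ i, y.val i ∈ 𝒜₁) → mf ≤ f y) (h𝒜₁₂ : 𝒜₁ ⊆ 𝒜₂)
    (x : MShift A) {ℓ r : ℕ} (hℓ : x.val ℓ < I₁) (hr : x.val (ℓ + r) < I₁)
    (hx : ∀ j ≤ r, x.val (ℓ + j) ∈ 𝒜₂) :
    ∃ (z : MShift A) (q : ℕ), q ≤ P₀ ∧ Function.IsPeriodicPt mshift (r + 1 + q) z ∧
      (∀ i, z.val i ∈ 𝒜₂) ∧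
      birkhoffSum mshift f (r + 1) (mshift^[ℓ] x) - V + birkhoffSum mshift f q (mshift^[r + 1] z)
        ≤ birkhoffSum mshift f (r + 1 + q) z ∧
      q * mf - V ≤ birkhoffSum mshift f q (mshift^[r + 1] z) := by
  obtain ⟨w, hwP, hw𝒜, hw⟩ := hconn _ hr _ hℓ
  obtain ⟨w', -, hw'𝒜, hw'⟩ := hconn _ hℓ _ hr
  obtain ⟨z, hzper, hz, hzx, hzw⟩ := exists_isPeriodicPt_range'_append x ℓ r hw
  obtain ⟨y, hy, hyw⟩ := exists_val_eq_getD_of_isChain hw hw'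
  refine ⟨z, w.length, hwP, hzper, fun i => ?_, ?_, ?_⟩
  · rcases List.mem_append.mp (hz i) with hi | hi
    · obtain ⟨j, hj, hji⟩ := List.mem_map.mp hi
      rw [List.mem_range'_1] at hj
      rw [← hji, show j = ℓ + (j - ℓ) by omega]
      exact hx _ (by omega)
    · exact h𝒜₁₂ (hw𝒜 _ hi)
  · have hxz := hV.birkhoffSum_le hV0 (x := mshift^[ℓ] x) (y := z) (q := r + 1) fun i hi => by
      rw [iterate_mshift_val, hzx i (by omega), Nat.add_comm]
    rw [birkhoffSum_add mshift f (r + 1) w.length z]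
    linarith
  · have hy𝒜₁ : ∀ i, y.val i ∈ 𝒜₁ := fun i => by
      rcases List.mem_cons.mp (hy i) with h | h
      · exact h ▸ h𝒜₁ _ hr
      rcases List.mem_append.mp h with h | h
      · exact hw𝒜 _ h
      rcases List.mem_cons.mp h with h | h
      · exact h ▸ h𝒜₁ _ hℓ
      · exact hw'𝒜 _ h
    have hmf_le : w.length * mf ≤ birkhoffSum mshift f w.length y := by
      simpa [birkhoffSum] using card_nsmul_le_sum (range w.length) (fun k => f (mshift^[k] y)) mf
        fun k _ => hmf _ fun i => by rw [iterate_mshift_val]; exact hy𝒜₁ _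
    have hyz := hV.birkhoffSum_le hV0 (x := y) (y := mshift^[r + 1] z) fun i hi => by
      rw [hyw i hi, iterate_mshift_val, Nat.add_comm, hzw i hi]
    linarith

end MShift

open MShift in
theorem stmt9_general (A : ℕ → ℕ → Bool)
    (hirr : ∀ i j : ℕ, ∃ w : List ℕ,
      List.Chain (fun a b => A a b = true) i (w ++ [j]))
    (f : MShift A → ℝ)
    (hcoer : ∀ C : ℝ, ∃ N : ℕ, ∀ y : MShift A, N ≤ y.val 0 → f y < C)
    (V : ℝ) (hV0 : 0 ≤ V)
    (hV : ∀ (r : ℕ) (x y : MShift A), (∀ i ≤ r, x.val i = y.val i) →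
      ∑ j ∈ Finset.range (r + 1), f (mshift^[j] x) ≤
        ∑ j ∈ Finset.range (r + 1), f (mshift^[j] y) + V)
    (β ε : ℝ)
    (hβ : β = sSup ((fun μ : Measure (MShift A) => ∫ x, f x ∂μ) ''
      {μ | IsProbabilityMeasure μ ∧ Measure.map mshift μ = μ}))
    (I₁ : ℕ) (hI₁ : ∀ y : MShift A, I₁ ≤ y.val 0 → f y < β - ε)
    (𝒜₁ : Finset ℕ) (h𝒜₁ : ∀ i < I₁, i ∈ 𝒜₁) (P₀ : ℕ)
    (hconn : ∀ i < I₁, ∀ j < I₁, ∃ w : List ℕ, w.length ≤ P₀ ∧ (∀ a ∈ w, a ∈ 𝒜₁) ∧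
      List.Chain (fun a b => A a b = true) i (w ++ [j]))
    (mf : ℝ) (hmf : ∀ y : MShift A, (∀ i, y.val i ∈ 𝒜₁) → mf ≤ f y)
    (I₂ : ℕ) (hI₁₂ : I₁ ≤ I₂)
    (𝒜₂ : Finset ℕ) (h𝒜₂ : ∀ i < I₂, i ∈ 𝒜₂) (h𝒜₁₂ : 𝒜₁ ⊆ 𝒜₂)
    (δ : ℝ) (hδ : 0 < δ)
    (hI₂ : ∀ y : MShift A, I₂ ≤ y.val 0 →
      f y ≤ min (-((P₀ : ℝ) * |mf| + ((P₀ : ℝ) - 1) * |β| + 2 * V)) (β - ε - V) - δ)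
    (x : MShift A) (n : ℕ) (hn : 1 ≤ n) (hper : mshift^[n] x = x)
    (hβx : β - ε ≤ (n : ℝ)⁻¹ * ∑ j ∈ Finset.range n, f (mshift^[j] x))
    (hout : ∃ i, x.val i ∉ 𝒜₂) :
    ∃ (z : MShift A) (p : ℕ), 1 ≤ p ∧ mshift^[p] z = z ∧ (∀ i, z.val i ∈ 𝒜₂) ∧
      (n : ℝ)⁻¹ * ∑ j ∈ Finset.range n, f (mshift^[j] x) <
        (p : ℝ)⁻¹ * ∑ j ∈ Finset.range p, f (mshift^[j] z) ∧
      ∃ ℓ m r : ℕ, r < m ∧ x.val ℓ < I₁ ∧ I₂ ≤ x.val (ℓ + m) ∧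
        (∀ j < m, x.val (ℓ + j) < I₂) ∧
        (n : ℝ)⁻¹ * ∑ j ∈ Finset.range n, f (mshift^[j] x) ≤
          ((m : ℝ) + 1)⁻¹ * ∑ j ∈ Finset.range (m + 1), f (mshift^[ℓ + j] x) ∧
        ((r : ℝ) + 2)⁻¹ *
            (f (mshift^[ℓ + m] x) + ∑ j ∈ Finset.range (r + 1), f (mshift^[ℓ + j] x)) +
            δ / ((r : ℝ) + 2) ≤
          (p : ℝ)⁻¹ * ∑ j ∈ Finset.range p, f (mshift^[j] z) := by
  have hsum_le : ∀ (y : MShift A) (p : ℕ), 1 ≤ p → mshift^[p] y = y →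
      birkhoffSum mshift f p y ≤ p * β := fun y p hp hy =>
    (inv_mul_le_iff₀ (by positivity)).mp <| hβ ▸ birkhoffAverage_le_sSup_integral
      measurable_mshift (bddAbove_range_of_coercive (exists_val_zero_eq fun j => hirr j j) hcoer hV)
      (by omega) hy
  have hsmall : ∀ j, I₁ ≤ x.val j → f (mshift^[j] x) < (n : ℝ)⁻¹ * birkhoffSum mshift f n x :=
    fun j hj => (hI₁ _ (by rwa [iterate_mshift_val, zero_add])).trans_le hβx
  obtain ⟨ℓ, m, hwin⟩ := exists_isHeavyWindow_of_periodic hI₁₂ hsmall (Nat.one_le_iff_ne_zero.mp hn)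
    (fun j => by rw [← iterate_mshift_val, hper])
    (fun c => by rw [mul_inv_cancel_left₀ (by positivity), ← birkhoffSum_iterate,
      Function.IsPeriodicPt.birkhoffSum_iterate hper])
    (hout.imp fun i hi => not_lt.mp fun h => hi (h𝒜₂ _ h))
  obtain ⟨r, hrm, hr, hcut⟩ := hwin.exists_cut hI₁₂ hsmall
  obtain ⟨z, q, hqP, hzper, hz𝒜₂, hZ, hW⟩ := exists_isPeriodicPt_of_cut (𝒜₁ := ↑𝒜₁) (𝒜₂ := ↑𝒜₂)
    hV hV0 h𝒜₁ hconn hmf (Finset.coe_subset.mpr h𝒜₁₂) x hwin.start_lt hr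
    fun j hj => h𝒜₂ _ (hwin.lt_of_lt_stop j (by omega))
  rw [birkhoffSum_iterate] at hZ
  obtain ⟨hgain, hκ⟩ := average_gain_of_cut hδ hβx
    ((inv_mul_le_iff₀ (by positivity)).mpr (hsum_le x n hn hper)) hqP hcut
    (hI₂ _ (by rw [iterate_mshift_val, zero_add]; exact hwin.le_stop))
    (fun h => by simp [h, birkhoffSum_zero]) hW hZ (by exact_mod_cast hsum_le z _ (by omega) hzper)
  refine ⟨z, r + 1 + q, by omega, hzper, hz𝒜₂, hgain, ℓ, m, r, hrm, hwin.start_lt, hwin.le_stop,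
    hwin.lt_of_lt_stop, ?_, hκ⟩
  rw [le_inv_mul_iff₀ (by positivity)]
  exact_mod_cast hwin.mul_le_sum

/-- Key cutting lemma, lemma 3 of the paper. Under the full setup of
the paper — `A` irreducible; `f` coercive with bounded variation `V`; `β` the
optimal ergodic average; `I₁` with `sup f|[j] < β - ε` for `j ≥ I₁`; `𝒜₁ ⊇ {0,…,I₁-1}`
a finite alphabet with chosen connecting words of length `≤ P₀` and `mf` a lower
bound for `f` on `Σ_A(𝒜₁)`; `I₂ ≥ I₁` and `𝒜₂ ⊇ 𝒜₁ ∪ {0,…,I₂-1}` finite irreducible,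
with `sup f|[j] ≤ min{C₁,C₂} - δ` for `j ≥ I₂`, `δ > 0` — every periodic point `x`
with `β(x) ≥ β - ε` whose orbit leaves `Σ_A(𝒜₂)` admits a periodic point
`z ∈ Σ_A(𝒜₂)` with `β(z) > β(x)`, and moreover `β(z) ≥ κ_r(ℓ,m|x) + δ/(r+2)` for the
word `x_ℓ … x_{ℓ+m}` given by the maximal-word decomposition. -/
theorem stmt9 (A : ℕ → ℕ → Bool)
    (hirr : ∀ i j : ℕ, ∃ w : List ℕ,
      List.Chain (fun a b => A a b = true) i (w ++ [j]))
    (f : MShift A → ℝ)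
    (hcoer : ∀ C : ℝ, ∃ N : ℕ, ∀ y : MShift A, N ≤ y.val 0 → f y < C)
    (V : ℝ) (hV0 : 0 ≤ V)
    (hV : ∀ (r : ℕ) (x y : MShift A), (∀ i ≤ r, x.val i = y.val i) →
      ∑ j ∈ Finset.range (r + 1), f (mshift^[j] x) ≤
        ∑ j ∈ Finset.range (r + 1), f (mshift^[j] y) + V)
    (β ε : ℝ) (hε : 0 < ε)
    (hβ : β = sSup ((fun μ : Measure (MShift A) => ∫ x, f x ∂μ) ''
      {μ | IsProbabilityMeasure μ ∧ Measure.map mshift μ = μ}))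
    (I₁ : ℕ) (hI₁ : ∀ y : MShift A, I₁ ≤ y.val 0 → f y < β - ε)
    (𝒜₁ : Finset ℕ) (h𝒜₁ : ∀ i < I₁, i ∈ 𝒜₁) (P₀ : ℕ)
    (hconn : ∀ i < I₁, ∀ j < I₁, ∃ w : List ℕ, w.length ≤ P₀ ∧ (∀ a ∈ w, a ∈ 𝒜₁) ∧
      List.Chain (fun a b => A a b = true) i (w ++ [j]))
    (mf : ℝ) (hmf : ∀ y : MShift A, (∀ i, y.val i ∈ 𝒜₁) → mf ≤ f y)
    (I₂ : ℕ) (hI₁₂ : I₁ ≤ I₂)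
    (𝒜₂ : Finset ℕ) (h𝒜₂ : ∀ i < I₂, i ∈ 𝒜₂) (h𝒜₁₂ : 𝒜₁ ⊆ 𝒜₂)
    (h𝒜₂irr : ∀ i ∈ 𝒜₂, ∀ j ∈ 𝒜₂, ∃ w : List ℕ, (∀ a ∈ w, a ∈ 𝒜₂) ∧
      List.Chain (fun a b => A a b = true) i (w ++ [j]))
    (δ : ℝ) (hδ : 0 < δ)
    (hI₂ : ∀ y : MShift A, I₂ ≤ y.val 0 →
      f y ≤ min (-((P₀ : ℝ) * |mf| + ((P₀ : ℝ) - 1) * |β| + 2 * V)) (β - ε - V) - δ)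
    (x : MShift A) (n : ℕ) (hn : 1 ≤ n) (hper : mshift^[n] x = x)
    (hβx : β - ε ≤ (n : ℝ)⁻¹ * ∑ j ∈ Finset.range n, f (mshift^[j] x))
    (hout : ∃ i, x.val i ∉ 𝒜₂) :
    ∃ (z : MShift A) (p : ℕ), 1 ≤ p ∧ mshift^[p] z = z ∧ (∀ i, z.val i ∈ 𝒜₂) ∧
      (n : ℝ)⁻¹ * ∑ j ∈ Finset.range n, f (mshift^[j] x) <
        (p : ℝ)⁻¹ * ∑ j ∈ Finset.range p, f (mshift^[j] z) ∧
      ∃ ℓ m r : ℕ, r < m ∧ x.val ℓ < I₁ ∧ I₂ ≤ x.val (ℓ + m) ∧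
        (∀ j < m, x.val (ℓ + j) < I₂) ∧
        (n : ℝ)⁻¹ * ∑ j ∈ Finset.range n, f (mshift^[j] x) ≤
          ((m : ℝ) + 1)⁻¹ * ∑ j ∈ Finset.range (m + 1), f (mshift^[ℓ + j] x) ∧
        ((r : ℝ) + 2)⁻¹ *
            (f (mshift^[ℓ + m] x) + ∑ j ∈ Finset.range (r + 1), f (mshift^[ℓ + j] x)) +
            δ / ((r : ℝ) + 2) ≤
          (p : ℝ)⁻¹ * ∑ j ∈ Finset.range p, f (mshift^[j] z) :=
  stmt9_general A hirr f hcoer V hV0 hV β ε hβ I₁ hI₁ 𝒜₁ h𝒜₁ P₀ hconn mf hmf I₂ hI₁₂ 𝒜₂ h𝒜₂ h𝒜₁₂ δ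
    hδ hI₂ x n hn hper hβx hout
end
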